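/- (Lorentz invariance of the minimal connection coefficients, algebraic form.) Let Λ, t, s, ds, dΛ, ω ∈ ℂ⊗ℍ with Λ·Λ̄ = 1, and set ω' := Λ·ω·Λ̄ − dΛ·Λ̄. Then ⟨Λ·t·Λ̄*, dΛ·s·Λ̄* + Λ·ds·Λ̄* + Λ·s·(dΛ)‾* + ω'·(Λ·s·Λ̄*) + (Λ·s·Λ̄*)·(ω'‾*)⟩ = ⟨t, ds + ω·s + s·ω̄*⟩. (Here t plays the role of the dual basis element sᵘ, s of a basis element s_ν, and ds, dΛ of the derivatives ∂s_ν, ∂Λ, the transformed derivative being expanded by the Leibniz rule; the statement expresses Γ'^μ_{νρ} = Γ^μ_{νρ} under local Lorentz transformations.) -/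

import Mathlib

/-!
Set `B := Λ̄*`. Since `Λ̄Λ = 1`, the Leibniz terms `dΛ·s·B` and `Λ·s·(dΛ)‾*` produced by
differentiating `Λ·s·B` are cancelled by the inhomogeneous part `−dΛ·Λ̄` of `ω'` and its
conjugate, so the transformed covariant derivative is `Λ·(ds + ω·s + s·ω̄*)·B`.
The inner product is invariant under `x ↦ Λ·x·B` because `Λ̄Λ = 1`, `B·B̄ = (Λ̄Λ)* = 1`,
and the scalar part of a product is cyclic.
-/

open scoped Quaternion

noncomputable section

/-- Componentwise complex conjugation `x ↦ x*` on the complexified quaternions `ℂ⊗ℍ`. -/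
def cconj (x : ℍ[ℂ]) : ℍ[ℂ] :=
  ⟨(starRingEnd ℂ) x.re, (starRingEnd ℂ) x.imI, (starRingEnd ℂ) x.imJ, (starRingEnd ℂ) x.imK⟩

/-- `x̄*`: quaternionic conjugation (the star operation, negating the three imaginary
components) followed by componentwise complex conjugation. -/
def barStar (x : ℍ[ℂ]) : ℍ[ℂ] := cconj (star x)

/-- The bilinear inner product `⟨x,y⟩ = (x·ȳ).re`, so that `2⟨x,y⟩ = x·ȳ + y·x̄`. -/
def ip (x y : ℍ[ℂ]) : ℂ := (x * star y).re

namespace Quaternion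

variable {R S : Type*} [CommRing R] [CommRing S]

theorem re_mul_comm (x y : ℍ[R]) : (x * y).re = (y * x).re := by
  simp only [re_mul]
  ring

theorem star_mul_self_eq_one_of_mul_star {x : ℍ[R]} (h : x * star x = 1) : star x * x = 1 := by
  rw [star_comm_self', h]

@[simps]
def map (f : R →+* S) (x : ℍ[R]) : ℍ[S] := ⟨f x.re, f x.imI, f x.imJ, f x.imK⟩

def mapRingHom (f : R →+* S) : ℍ[R] →+* ℍ[S] where
  toFun := map f
  map_one' := by ext <;> simp
  map_mul' x y := by ext <;> simp [re_mul, imI_mul, imJ_mul, imK_mul]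
  map_zero' := by ext <;> simp
  map_add' x y := by ext <;> simp

theorem star_mapRingHom (f : R →+* S) (x : ℍ[R]) :
    star (mapRingHom f x) = mapRingHom f (star x) := by
  ext <;> simp [mapRingHom]

end Quaternion

open Quaternion

theorem cconj_eq_mapRingHom (x : ℍ[ℂ]) : cconj x = mapRingHom (starRingEnd ℂ) x := rfl

theorem barStar_mul (x y : ℍ[ℂ]) : barStar (x * y) = barStar y * barStar x := by
  simp only [barStar, star_mul, cconj_eq_mapRingHom, map_mul]

theorem barStar_sub (x y : ℍ[ℂ]) : barStar (x - y) = barStar x - barStar y := by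
  rw [barStar, show star (x - y) = star x - star y from star_sub x y, cconj_eq_mapRingHom,
    map_sub]
  rfl

theorem barStar_one : barStar 1 = 1 := by
  simp only [barStar, star_one, cconj_eq_mapRingHom, map_one]

theorem barStar_mul_star_barStar {Λ : ℍ[ℂ]} (h : star Λ * Λ = 1) :
    barStar Λ * star (barStar Λ) = 1 := by
  rw [barStar, cconj_eq_mapRingHom, star_mapRingHom, star_star, ← map_mul, h, map_one]

theorem ip_mul_mul {a b : ℍ[ℂ]} (ha : star a * a = 1) (hb : b * star b = 1) (x y : ℍ[ℂ]) :
    ip (a * x * b) (a * y * b) = ip x y := by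
  have hab : a * x * b * star (a * y * b) = a * (x * star y * star a) := by
    simp only [star_mul, mul_assoc, ← mul_assoc b (star b), hb, one_mul]
  rw [ip, ip, hab, re_mul_comm, mul_assoc, ha, mul_one]

def gaugeTransform (Λ dΛ ω : ℍ[ℂ]) : ℍ[ℂ] := Λ * ω * star Λ - dΛ * star Λ

def covDeriv (ω s ds : ℍ[ℂ]) : ℍ[ℂ] := ds + ω * s + s * barStar ω

section Gauge

variable {Λ dΛ ω s : ℍ[ℂ]}

theorem gaugeTransform_mul {b : ℍ[ℂ]} (hΛ : star Λ * Λ = 1) :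
    gaugeTransform Λ dΛ ω * (Λ * s * b) = Λ * (ω * s) * b - dΛ * s * b := by
  have cancel : ∀ x, star Λ * (Λ * x) = x := fun x => by rw [← mul_assoc, hΛ, one_mul]
  simp only [gaugeTransform, sub_mul, mul_assoc, cancel]

theorem mul_barStar_gaugeTransform (hΛ : star Λ * Λ = 1) :
    Λ * s * barStar Λ * barStar (gaugeTransform Λ dΛ ω)
      = Λ * (s * barStar ω) * barStar Λ - Λ * s * barStar dΛ := by
  have cancel : ∀ x, barStar Λ * (barStar (star Λ) * x) = x := fun x => by
    rw [← mul_assoc, ← barStar_mul, hΛ, barStar_one, one_mul]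
  simp only [gaugeTransform, barStar_sub, barStar_mul, mul_sub, mul_assoc, cancel]

theorem covDeriv_gaugeTransform {ds : ℍ[ℂ]} (hΛ : star Λ * Λ = 1) :
    dΛ * s * barStar Λ + Λ * ds * barStar Λ + Λ * s * barStar dΛ
        + gaugeTransform Λ dΛ ω * (Λ * s * barStar Λ)
        + Λ * s * barStar Λ * barStar (gaugeTransform Λ dΛ ω)
      = Λ * covDeriv ω s ds * barStar Λ := by
  rw [gaugeTransform_mul hΛ, mul_barStar_gaugeTransform hΛ, covDeriv]
  noncomm_ring

end Gauge

/-- Lorentz invariance of the minimal connection coefficients (algebraic form):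
with `Λ·Λ̄ = 1` and `ω' = Λ·ω·Λ̄ − dΛ·Λ̄`,
`⟨Λ·t·Λ̄*, ∂'(Λ·s·Λ̄*) + ω'·(Λ·s·Λ̄*) + (Λ·s·Λ̄*)·ω'̄*⟩ = ⟨t, ds + ω·s + s·ω̄*⟩`,
where `∂'(Λ·s·Λ̄*)` is expanded by the Leibniz rule. -/
theorem stmt17 (Λ t s ds dΛ ω ω' : ℍ[ℂ]) (hΛ : Λ * star Λ = 1)
    (hω' : ω' = Λ * ω * star Λ - dΛ * star Λ) :
    ip (Λ * t * barStar Λ)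
        (dΛ * s * barStar Λ + Λ * ds * barStar Λ + Λ * s * barStar dΛ
          + ω' * (Λ * s * barStar Λ) + (Λ * s * barStar Λ) * barStar ω')
      = ip t (ds + ω * s + s * barStar ω) := by
  have hΛ' : star Λ * Λ = 1 := star_mul_self_eq_one_of_mul_star hΛ
  rw [hω', ← gaugeTransform, covDeriv_gaugeTransform hΛ', covDeriv,
    ip_mul_mul hΛ' (barStar_mul_star_barStar hΛ')]
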